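/- arXiv:1902.07615 — 4 statements merged into one kernel-verified Lean document; each statement's English description precedes it below -/
import Mathlib

section
/- Let F : ℕ → ℕ be the Fibonacci sequence with F 0 = 1, F 1 = 1 and F (n+2) = F (n+1) + F n, for n ≥ 1 let φ_n = (F n : ℝ) / (F (n−1) : ℝ), and let φ = (1 + √5)/2. Then for every m ≥ 1, |φ_m − φ| ≤ 1 / (F (m−1) : ℝ). -/
/-! Binet's formula gives `fib (n + 1) - φ * fib n = ψ ^ n` with `ψ = (1 - √5) / 2`, so the
ratio `fib (n + 1) / fib n` differs from `φ` by `ψ ^ n / fib n`, and `|ψ| < 1`. -/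

-- Scoped to this section: under `open Nat`, `φ` is the totient notation, clashing with the
-- binder `φ` of the main theorem.
section

open Nat Real

theorem eq_fib_succ_of_fib_rec {F : ℕ → ℕ} (hF0 : F 0 = 1) (hF1 : F 1 = 1)
    (hFrec : ∀ n, F (n + 2) = F (n + 1) + F n) (n : ℕ) : F n = fib (n + 1) := by
  induction n using Nat.twoStepInduction with
  | zero => simpa using hF0
  | one => simpa using hF1
  | more n ih ih' => rw [hFrec, ih, ih', fib_add_two (n := n + 1), add_comm]

theorem abs_goldenConj_le_one : |goldenConj| ≤ 1 :=
  abs_le.mpr ⟨neg_one_lt_goldenConj.le, goldenConj_neg.le.trans zero_le_one⟩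

theorem abs_fib_succ_div_fib_sub_goldenRatio_le {n : ℕ} (hn : 0 < n) :
    |(fib (n + 1) : ℝ) / fib n - goldenRatio| ≤ 1 / fib n := by
  have hfib : (0 : ℝ) < fib n := by exact_mod_cast fib_pos.mpr hn
  have hdiff : (fib (n + 1) : ℝ) / fib n - goldenRatio = goldenConj ^ n / fib n := by
    rw [← fib_succ_sub_goldenRatio_mul_fib]
    field_simp
  rw [hdiff, abs_div, abs_of_pos hfib, abs_pow]
  gcongr
  exact pow_le_one₀ (abs_nonneg _) abs_goldenConj_le_one

end

/-- Explicit convergence-rate bound: for every `m ≥ 1`,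
`|φ m - (1 + √5)/2| ≤ 1 / F (m - 1)`. -/
theorem fib_ratio_dist_goldenRatio_le (F : ℕ → ℕ) (hF0 : F 0 = 1) (hF1 : F 1 = 1)
    (hFrec : ∀ n : ℕ, F (n + 2) = F (n + 1) + F n)
    (φ : ℕ → ℝ) (hφ : ∀ n : ℕ, 1 ≤ n → φ n = (F n : ℝ) / (F (n - 1) : ℝ)) :
    ∀ m : ℕ, 1 ≤ m → |φ m - (1 + Real.sqrt 5) / 2| ≤ 1 / (F (m - 1) : ℝ) := by
  intro m hm
  have hm' : m - 1 + 1 = m := Nat.sub_add_cancel hm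
  rw [hφ m hm, eq_fib_succ_of_fib_rec hF0 hF1 hFrec, eq_fib_succ_of_fib_rec hF0 hF1 hFrec, hm']
  exact abs_fib_succ_div_fib_sub_goldenRatio_le hm
end

section
/- Let f : ℝ → ℂ be continuous and 2π-periodic, and for n ∈ ℤ let c_n = (1/(2π)) ∫₀^{2π} f(x)·exp(−i·n·x) dx be its Fourier coefficients. Assume Σ_{n∈ℤ} |c_n| < ∞ and that f(x) = Σ_{n∈ℤ} c_n·exp(i·n·x) for every x ∈ ℝ. Then for every integer N ≥ 1, the equispaced average satisfies (2π/N)·Σ_{m=0}^{N−1} f(2πm/N) = 2π·Σ_{k∈ℤ} c_{kN}. -/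
/-!
Substituting the Fourier series at the nodes `2πm/N` and summing the finitely many series
termwise turns the left side into `Σₙ cₙ Σₘ (ζⁿ)ᵐ` with `ζ = exp (2πi/N)`. The inner geometric
sum is `N` when `N ∣ n` and `0` otherwise, so only the coefficients `c (k N)` survive.
-/

open Complex Finset
open scoped Real

theorem IsPrimitiveRoot.sum_range_zpow_pow_eq_ite {K : Type*} [Field K] {ζ : K} {N : ℕ}
    (hζ : IsPrimitiveRoot ζ N) (n : ℤ) :
    ∑ m ∈ range N, (ζ ^ n) ^ m = if (N : ℤ) ∣ n then (N : K) else 0 := by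
  split_ifs with hdvd
  · simp [(hζ.zpow_eq_one_iff_dvd n).2 hdvd]
  · have hζn : (ζ ^ n) ^ N = 1 := by
      rw [← zpow_natCast, ← zpow_mul, mul_comm, zpow_mul, zpow_natCast, hζ.pow_eq_one, one_zpow]
    rw [geom_sum_eq (mt (hζ.zpow_eq_one_iff_dvd n).1 hdvd), hζn, sub_self, zero_div]

theorem exp_mul_equispaced_node (N : ℕ) (n : ℤ) (m : ℕ) :
    exp (I * n * ((2 * π * m / N : ℝ) : ℂ)) = (exp (2 * π * I / N) ^ n) ^ m := by
  rw [← exp_int_mul, ← exp_nat_mul]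
  push_cast
  ring_nf

theorem sum_range_exp_mul_equispaced_node (N : ℕ) (hN : N ≠ 0) (n : ℤ) :
    ∑ m ∈ range N, exp (I * n * ((2 * π * m / N : ℝ) : ℂ)) =
      if (N : ℤ) ∣ n then (N : ℂ) else 0 := by
  simp only [exp_mul_equispaced_node]
  exact (isPrimitiveRoot_exp N hN).sum_range_zpow_pow_eq_ite n

theorem hasSum_sum_equispaced_of_hasSum_fourier {f : ℝ → ℂ} {c : ℤ → ℂ}
    (hrep : ∀ x : ℝ, HasSum (fun n : ℤ => c n * exp (I * n * x)) (f x))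
    {N : ℕ} (hN : N ≠ 0) :
    HasSum (fun k : ℤ => N * c (k * N)) (∑ m ∈ range N, f (2 * π * m / N)) := by
  have hnodes := hasSum_sum (s := range N) fun m _ => hrep (2 * π * m / N)
  simp only [← mul_sum, sum_range_exp_mul_equispaced_node N hN, mul_ite, mul_zero] at hnodes
  have hmul_inj : Function.Injective fun k : ℤ => k * (N : ℤ) :=
    mul_left_injective₀ (Int.natCast_ne_zero.2 hN)
  rw [← hmul_inj.hasSum_iff] at hnodes
  · simpa [Function.comp_def, mul_comm] using hnodes
  · intro n hn
    rw [if_neg]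
    rintro ⟨k, rfl⟩
    exact hn ⟨k, mul_comm _ _⟩

theorem trapezoid_aliasing_general (f : ℝ → ℂ)
    (c : ℤ → ℂ)
    (hrep : ∀ x : ℝ,
      HasSum (fun n : ℤ => c n * Complex.exp (Complex.I * (n : ℂ) * (x : ℂ))) (f x))
    (N : ℕ) (hN : 1 ≤ N) :
    ((2 * Real.pi / N : ℝ) : ℂ) *
        ∑ m ∈ Finset.range N, f (2 * Real.pi * m / N) =
      ((2 * Real.pi : ℝ) : ℂ) * ∑' k : ℤ, c (k * (N : ℤ)) := by
  have hN0 : N ≠ 0 := Nat.one_le_iff_ne_zero.1 hN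
  rw [← (hasSum_sum_equispaced_of_hasSum_fourier hrep hN0).tsum_eq, tsum_mul_left]
  have : (N : ℂ) ≠ 0 := Nat.cast_ne_zero.2 hN0
  push_cast
  field_simp

/-- Aliasing identity: for a continuous `2π`-periodic `f : ℝ → ℂ` with absolutely
summable Fourier coefficients `c n` whose Fourier series converges pointwise to `f`,
the equispaced average satisfies
`(2π/N) Σ_{m=0}^{N-1} f(2πm/N) = 2π Σ_{k∈ℤ} c (k N)`. -/
theorem trapezoid_aliasing (f : ℝ → ℂ) (hf : Continuous f)
    (hper : Function.Periodic f (2 * Real.pi))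
    (c : ℤ → ℂ)
    (hc : ∀ n : ℤ, c n =
      (1 / (2 * Real.pi) : ℂ) *
        ∫ x in (0 : ℝ)..(2 * Real.pi), f x * Complex.exp (-Complex.I * (n : ℂ) * (x : ℂ)))
    (hsum : Summable fun n : ℤ => ‖c n‖)
    (hrep : ∀ x : ℝ,
      HasSum (fun n : ℤ => c n * Complex.exp (Complex.I * (n : ℂ) * (x : ℂ))) (f x))
    (N : ℕ) (hN : 1 ≤ N) :
    ((2 * Real.pi / N : ℝ) : ℂ) *
        ∑ m ∈ Finset.range N, f (2 * Real.pi * m / N) =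
      ((2 * Real.pi : ℝ) : ℂ) * ∑' k : ℤ, c (k * (N : ℤ)) :=
  trapezoid_aliasing_general f c hrep N hN
end

section
/- Let f : ℝ → ℂ be infinitely differentiable and 2π-periodic, let I = ∫₀^{2π} f(x) dx, and for N ≥ 1 let I_N = (2π/N)·Σ_{m=0}^{N−1} f(2πm/N) (the composite trapezoid rule with N uniform subintervals, which for 2π-periodic f equals the equispaced sum). Then for every natural number α there exists a constant C ≥ 0 such that for every integer N ≥ 1, |I − I_N| ≤ C / N^α. In other words, the trapezoid rule applied to a smooth periodic integrand over a full period converges faster than any polynomial rate. -/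
open Complex
open scoped ContDiff

noncomputable section TrapezoidAux

private lemma two_pi_pos : (0:ℝ) < 2 * Real.pi := by positivity

private instance fact_two_pi_pos : Fact ((0:ℝ) < 2 * Real.pi) := ⟨two_pi_pos⟩

private lemma periodic_deriv' {g : ℝ → ℂ} {c : ℝ} (h : Function.Periodic g c) :
    Function.Periodic (deriv g) c := by
  intro x
  have h1 : (fun y => g (y + c)) = g := funext h
  calc deriv g (x + c) = deriv (fun y => g (y + c)) x := (deriv_comp_add_const g c x).symm
    _ = deriv g x := by rw [h1]

private lemma norm_fourier_apply {T : ℝ} (n : ℤ) (x : AddCircle T) : ‖fourier n x‖ = 1 :=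
  Circle.norm_coe _

private lemma coeff_norm_le (g : ℝ → ℂ) (M : ℝ)
    (hM : ∀ x ∈ Set.Icc (0:ℝ) (2*Real.pi), ‖g x‖ ≤ M) (n : ℤ) :
    ‖fourierCoeffOn two_pi_pos g n‖ ≤ M := by
  have hM0 : 0 ≤ M := le_trans (norm_nonneg _) (hM 0 ⟨le_refl _, two_pi_pos.le⟩)
  rw [fourierCoeffOn_eq_integral, norm_smul]
  have h2 : ‖∫ x in (0:ℝ)..(2*Real.pi), fourier (-n) (x : AddCircle (2*Real.pi - 0)) • g x‖
      ≤ M * |2*Real.pi - 0| := by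
    apply intervalIntegral.norm_integral_le_of_norm_le_const
    intro x hx
    rw [norm_smul, norm_fourier_apply, one_mul]
    exact hM x (Set.mem_Icc_of_Ioc (by simpa [Set.uIoc_of_le two_pi_pos.le] using hx))
  calc ‖(1/(2*Real.pi - 0) : ℝ)‖ * ‖∫ x in (0:ℝ)..(2*Real.pi),
        fourier (-n) (x : AddCircle (2*Real.pi - 0)) • g x‖
      ≤ ‖(1/(2*Real.pi - 0) : ℝ)‖ * (M * |2*Real.pi - 0|) := by
        exact mul_le_mul_of_nonneg_left h2 (norm_nonneg _)
    _ = M := by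
        rw [Real.norm_eq_abs, abs_of_pos (by rw [sub_zero]; positivity), abs_of_pos (by rw [sub_zero]; positivity)]
        field_simp

private lemma coeff_step (g : ℝ → ℂ) (hg : ContDiff ℝ ∞ g)
    (hp : Function.Periodic g (2*Real.pi)) {n : ℤ} (hn : n ≠ 0) :
    ‖fourierCoeffOn two_pi_pos g n‖ ≤ ‖fourierCoeffOn two_pi_pos (deriv g) n‖ / |(n:ℝ)| := by
  have hd : ∀ x ∈ Set.uIcc (0:ℝ) (2*Real.pi), HasDerivAt g (deriv g x) x :=
    fun x _ => ((contDiff_infty_iff_deriv.mp hg).1 x).hasDerivAt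
  have hint : IntervalIntegrable (deriv g) MeasureTheory.volume 0 (2*Real.pi) :=
    ((contDiff_infty_iff_deriv.mp hg).2.continuous).intervalIntegrable _ _
  rw [fourierCoeffOn_of_hasDerivAt two_pi_pos hn hd hint]
  have hper0 : g (2*Real.pi) - g 0 = 0 := by
    have := hp 0
    rw [zero_add] at this
    rw [this, sub_self]
  rw [hper0, mul_zero, zero_sub, norm_mul, norm_neg, norm_mul]
  rw [norm_div, norm_one]
  have h1 : ‖(-2 * (Real.pi:ℂ) * I * (n:ℂ))‖ = 2 * Real.pi * |(n:ℝ)| := by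
    simp [norm_mul, Complex.norm_real, Complex.norm_intCast,
      abs_of_pos Real.pi_pos]
  have h2 : ‖((2*Real.pi : ℝ) : ℂ) - ((0:ℝ):ℂ)‖ = 2 * Real.pi := by
    simp [Complex.norm_real, abs_of_pos Real.pi_pos]
  rw [h1, h2]
  have hnpos : (0:ℝ) < |(n:ℝ)| := by
    simp only [abs_pos, ne_eq, Int.cast_eq_zero]; exact hn
  apply le_of_eq
  field_simp

private lemma coeff_decay (p : ℕ) : ∀ (g : ℝ → ℂ), ContDiff ℝ ∞ g →
    Function.Periodic g (2*Real.pi) →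
    ∃ B : ℝ, 0 ≤ B ∧ ∀ n : ℤ, n ≠ 0 → ‖fourierCoeffOn two_pi_pos g n‖ ≤ B / |(n:ℝ)|^p := by
  induction p with
  | zero =>
    intro g hg hp
    obtain ⟨M, hM⟩ := (isCompact_Icc (a := (0:ℝ)) (b := 2*Real.pi)).exists_bound_of_continuousOn
      hg.continuous.continuousOn
    refine ⟨max M 0, le_max_right _ _, fun n _ => ?_⟩
    simpa using coeff_norm_le g (max M 0) (fun x hx => le_trans (hM x hx) (le_max_left _ _)) n
  | succ p ih =>
    intro g hg hp
    obtain ⟨B, hB0, hB⟩ := ih (deriv g) (contDiff_infty_iff_deriv.mp hg).2 (periodic_deriv' hp)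
    refine ⟨B, hB0, fun n hn => ?_⟩
    have hnpos : (0:ℝ) < |(n:ℝ)| := by
      simp only [abs_pos, ne_eq, Int.cast_eq_zero]; exact hn
    calc ‖fourierCoeffOn two_pi_pos g n‖ ≤ ‖fourierCoeffOn two_pi_pos (deriv g) n‖ / |(n:ℝ)| :=
        coeff_step g hg hp hn
      _ ≤ (B / |(n:ℝ)|^p) / |(n:ℝ)| := by gcongr; exact hB n hn
      _ = B / |(n:ℝ)|^(p+1) := by rw [div_div, pow_succ]

private lemma sum_fourier_nodes (N : ℕ) (hN : 1 ≤ N) (i : ℤ) :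
    ∑ m ∈ Finset.range N, fourier i ((2*Real.pi*m/N : ℝ) : AddCircle (2*Real.pi)) =
      if (N:ℤ) ∣ i then (N:ℂ) else 0 := by
  have hNR : ((N:ℝ)) ≠ 0 := Nat.cast_ne_zero.mpr (by omega)
  have hNC : ((N:ℂ)) ≠ 0 := Nat.cast_ne_zero.mpr (by omega)
  have hπ : (Real.pi : ℂ) ≠ 0 := Complex.ofReal_ne_zero.mpr Real.pi_ne_zero
  set r : ℂ := Complex.exp (2 * Real.pi * I * i / N) with hr
  have hterm : ∀ m ∈ Finset.range N,
      fourier i ((2*Real.pi*m/N : ℝ) : AddCircle (2*Real.pi)) = r ^ m := by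
    intro m _
    rw [fourier_coe_apply, hr, ← Complex.exp_nat_mul]
    congr 1
    push_cast
    field_simp
  rw [Finset.sum_congr rfl hterm]
  have hrN : r ^ N = 1 := by
    rw [hr, ← Complex.exp_nat_mul]
    have : (N:ℂ) * (2 * Real.pi * I * i / N) = (i:ℂ) * (2 * Real.pi * I) := by
      field_simp
    rw [this, Complex.exp_int_mul_two_pi_mul_I]
  by_cases hdvd : (N:ℤ) ∣ i
  · rw [if_pos hdvd]
    obtain ⟨k, hk⟩ := hdvd
    have hr1 : r = 1 := by
      rw [hr, hk]
      have : 2 * (Real.pi:ℂ) * I * ((N:ℤ) * k : ℤ) / N = (k:ℂ) * (2 * Real.pi * I) := by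
        push_cast
        field_simp
      rw [this, Complex.exp_int_mul_two_pi_mul_I]
    simp [hr1]
  · have hr1 : r ≠ 1 := by
      intro h
      rw [hr, Complex.exp_eq_one_iff] at h
      obtain ⟨k, hk⟩ := h
      apply hdvd
      refine ⟨k, ?_⟩
      have : (i:ℂ) = (N:ℂ) * k := by
        have h2 : (2:ℂ) * Real.pi * I ≠ 0 := by
          simp [hπ, Complex.I_ne_zero]
        field_simp at hk
        linear_combination hk
      exact_mod_cast this
    rw [if_neg hdvd, geom_sum_eq hr1, hrN, sub_self, zero_div]

private lemma continuous_lift {f : ℝ → ℂ} (hf : Continuous f)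
    (hper : Function.Periodic f (2 * Real.pi)) : Continuous hper.lift :=
  hf.quotient_liftOn' _

private lemma lift_coe' {f : ℝ → ℂ} (hper : Function.Periodic f (2 * Real.pi)) (x : ℝ) :
    hper.lift ((x : ℝ) : AddCircle (2 * Real.pi)) = f x :=
  Function.Periodic.lift_coe hper x

private lemma fourierCoeff_lift_eq (f : ℝ → ℂ) (hper : Function.Periodic f (2 * Real.pi)) (n : ℤ) :
    fourierCoeff hper.lift n = fourierCoeffOn two_pi_pos f n := by
  rw [fourierCoeff_eq_intervalIntegral _ n 0, fourierCoeffOn_eq_integral]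
  simp only [zero_add, sub_zero]
  congr 1
  apply intervalIntegral.integral_congr
  intro x _
  simp only [lift_coe', fourier_coe_apply]
  norm_num

private lemma integral_eq_coeff_zero (f : ℝ → ℂ) :
    (∫ x in (0:ℝ)..(2*Real.pi), f x) = (2*Real.pi : ℂ) * fourierCoeffOn two_pi_pos f 0 := by
  rw [fourierCoeffOn_eq_integral]
  have : ∀ x : ℝ, fourier (-(0:ℤ)) ((x : ℝ) : AddCircle (2*Real.pi - 0)) • f x = f x := by
    intro x
    rw [neg_zero, fourier_zero, one_smul]
  rw [intervalIntegral.integral_congr (fun x _ => this x)]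
  rw [real_smul]
  push_cast
  rw [sub_zero]
  have hπ : (Real.pi:ℂ) ≠ 0 := Complex.ofReal_ne_zero.mpr Real.pi_ne_zero
  field_simp

end TrapezoidAux

/-- The trapezoid rule for a smooth `2π`-periodic integrand over a full period
converges faster than any polynomial rate: for every `α` there is `C ≥ 0` such
that `|I - I_N| ≤ C / N^α` for every `N ≥ 1`, where `I = ∫₀^{2π} f` and
`I_N = (2π/N) Σ_{m=0}^{N-1} f(2πm/N)`. -/
theorem trapezoid_periodic_superpolynomial_convergence (f : ℝ → ℂ)
    (hf : ContDiff ℝ (⊤ : ℕ∞) f) (hper : Function.Periodic f (2 * Real.pi)) (α : ℕ) :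
    ∃ C : ℝ, 0 ≤ C ∧ ∀ N : ℕ, 1 ≤ N →
      ‖(∫ x in (0 : ℝ)..(2 * Real.pi), f x) -
          ((2 * Real.pi / N : ℝ) : ℂ) *
            ∑ m ∈ Finset.range N, f (2 * Real.pi * m / N)‖ ≤
        C / (N : ℝ) ^ α := by
  haveI : Fact ((0:ℝ) < 2 * Real.pi) := ⟨two_pi_pos⟩
  have hf' : ContDiff ℝ ∞ f := hf.of_le (by simp)
  set c : ℤ → ℂ := fun n => fourierCoeffOn two_pi_pos f n with hc
  obtain ⟨B, hB0, hB⟩ := coeff_decay (α+2) f hf' hper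
  obtain ⟨B₂, hB₂0, hB₂⟩ := coeff_decay 2 f hf' hper
  set F : C(AddCircle (2*Real.pi), ℂ) := ⟨hper.lift, continuous_lift hf'.continuous hper⟩ with hF
  have hFc : ∀ n : ℤ, fourierCoeff (F : AddCircle (2*Real.pi) → ℂ) n = c n :=
    fun n => fourierCoeff_lift_eq f hper n
  -- summability of the Fourier coefficients
  have hsummable : Summable (fun n : ℤ => fourierCoeff (F : AddCircle (2*Real.pi) → ℂ) n) := by
    apply Summable.of_norm
    have hb : Summable (fun n : ℤ => ‖c 0‖ * (if n = (0:ℤ) then (1:ℝ) else 0) + B₂ * (1/(n:ℝ)^2)) :=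
      (((hasSum_ite_eq (0:ℤ) (1:ℝ)).summable).mul_left _).add
        ((Real.summable_one_div_int_pow.mpr one_lt_two).mul_left _)
    apply Summable.of_nonneg_of_le (fun n => norm_nonneg _) _ hb
    intro n
    rw [hFc]
    by_cases h : n = 0
    · subst h; simp
    · rw [if_neg h, mul_zero, zero_add]
      have h1 := hB₂ n h
      have h2 : B₂ / |(n:ℝ)|^2 = B₂ * (1/(n:ℝ)^2) := by
        rw [_root_.sq_abs, mul_one_div]
      rw [h2] at h1
      exact h1
  -- the constant
  set S : ℝ := ∑' j : ℤ, 1/(j:ℝ)^2 with hS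
  have hSsum : Summable (fun j : ℤ => 1/(j:ℝ)^2) := Real.summable_one_div_int_pow.mpr one_lt_two
  have hS0 : 0 ≤ S := tsum_nonneg (fun j => by positivity)
  refine ⟨2 * Real.pi * B * S, by positivity, ?_⟩
  intro N hN
  have hNR : (0:ℝ) < (N:ℝ) := by exact_mod_cast hN
  have hNZ : ((N:ℤ)) ≠ 0 := by omega
  -- pointwise convergence of the Fourier series at the nodes
  have hpt := has_pointwise_sum_fourier_series_of_summable hsummable
  have hnode : ∀ m : ℕ, HasSum
      (fun i : ℤ => c i • fourier i ((2*Real.pi*m/N : ℝ) : AddCircle (2*Real.pi)))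
      (f (2*Real.pi*m/N)) := by
    intro m
    have h := hpt ((2*Real.pi*m/N : ℝ) : AddCircle (2*Real.pi))
    have hFx : F ((2*Real.pi*m/N : ℝ) : AddCircle (2*Real.pi)) = f (2*Real.pi*m/N) :=
      lift_coe' hper _
    rw [hFx] at h
    simp only [hFc] at h
    exact h
  -- the equispaced sum as a tsum
  have hIN : HasSum
      (fun i : ℤ => ((2*Real.pi/N : ℝ) : ℂ) *
        ∑ m ∈ Finset.range N, c i • fourier i ((2*Real.pi*m/N : ℝ) : AddCircle (2*Real.pi)))
      (((2*Real.pi/N : ℝ) : ℂ) * ∑ m ∈ Finset.range N, f (2*Real.pi*m/N)) :=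
    (hasSum_sum (fun m _ => hnode m)).mul_left _
  set d : ℤ → ℂ := fun i => if (N:ℤ) ∣ i then (2*Real.pi : ℂ) * c i else 0 with hd
  have hterm : ∀ i : ℤ, ((2*Real.pi/N : ℝ) : ℂ) *
      ∑ m ∈ Finset.range N, c i • fourier i ((2*Real.pi*m/N : ℝ) : AddCircle (2*Real.pi)) = d i := by
    intro i
    rw [← Finset.smul_sum, sum_fourier_nodes N hN i]
    by_cases h : (N:ℤ) ∣ i
    · simp only [hd, if_pos h, smul_eq_mul]
      have : ((N:ℂ)) ≠ 0 := Nat.cast_ne_zero.mpr (by omega)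
      push_cast
      field_simp
    · simp only [hd, if_neg h, smul_zero, mul_zero]
  rw [funext hterm] at hIN
  -- the integral as a tsum
  set e : ℤ → ℂ := fun i => if i = (0:ℤ) then (2*Real.pi : ℂ) * c 0 else 0 with he
  have hI : HasSum e (∫ x in (0:ℝ)..(2*Real.pi), f x) := by
    rw [integral_eq_coeff_zero f]
    exact hasSum_ite_eq (0:ℤ) _
  have hdiff : HasSum (fun i => e i - d i)
      ((∫ x in (0:ℝ)..(2*Real.pi), f x) -
        ((2*Real.pi/N : ℝ) : ℂ) * ∑ m ∈ Finset.range N, f (2*Real.pi*m/N)) := hI.sub hIN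
  -- estimate
  set inj : ℤ → ℤ := fun j => (N:ℤ) * j with hinjdef
  have hinj : Function.Injective inj := fun a b h => by
    simpa [hinjdef, hNZ, show N ≠ 0 by omega] using h
  have hsupp : ∀ i ∉ Set.range inj, e i - d i = 0 := by
    intro i hi
    have hndvd : ¬ (N:ℤ) ∣ i := by
      rintro ⟨k, hk⟩; exact hi ⟨k, hk.symm⟩
    have hne : i ≠ 0 := by
      intro h0; exact hi ⟨0, by simp [hinjdef, h0]⟩
    simp [he, hd, hndvd, hne]
  have hzero : ∀ i ∉ Set.range inj, ‖e i - d i‖ = 0 := by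
    intro i hi; rw [hsupp i hi, norm_zero]
  have hbound : ∀ j : ℤ, ‖e (inj j) - d (inj j)‖ ≤ (2*Real.pi*B/(N:ℝ)^α) * (1/(j:ℝ)^2) := by
    intro j
    by_cases hj : j = 0
    · subst hj
      have h00 : inj 0 = 0 := by simp [hinjdef]
      rw [h00]
      have h0 : e 0 - d 0 = 0 := by simp [he, hd]
      rw [h0]; simp
    · have hjR0 : ((j:ℝ)) ≠ 0 := Int.cast_ne_zero.mpr hj
      have hij0 : inj j ≠ 0 := by simp [hinjdef, hNZ, hj, show N ≠ 0 by omega]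
      have hdv : (N:ℤ) ∣ inj j := ⟨j, rfl⟩
      have h1 : e (inj j) - d (inj j) = -((2*Real.pi : ℂ) * c (inj j)) := by
        simp [he, hd, hij0, hdv]
      rw [h1, norm_neg, norm_mul]
      have h2 : ‖(2*Real.pi : ℂ)‖ = 2*Real.pi := by
        have : (2*Real.pi : ℂ) = ((2*Real.pi : ℝ) : ℂ) := by push_cast; ring
        rw [this, Complex.norm_real, Real.norm_eq_abs, abs_of_pos two_pi_pos]
      rw [h2]
      have hjR : (1:ℝ) ≤ |(j:ℝ)| := by
        have h5 : (1:ℤ) ≤ |j| := Int.one_le_abs (by omega)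
        calc (1:ℝ) = ((1:ℤ):ℝ) := by norm_num
          _ ≤ ((|j|:ℤ):ℝ) := by exact_mod_cast h5
          _ = |(j:ℝ)| := by push_cast; ring
      have hNR1 : (1:ℝ) ≤ (N:ℝ) := by exact_mod_cast hN
      have hineq : (N:ℝ)^α * (j:ℝ)^2 ≤ |((inj j : ℤ) : ℝ)|^(α+2) := by
        have habs : |((inj j : ℤ) : ℝ)| = (N:ℝ) * |(j:ℝ)| := by
          simp [hinjdef, abs_mul, abs_of_pos hNR]
        rw [habs, mul_pow]
        have e1 : (N:ℝ)^α ≤ (N:ℝ)^(α+2) := pow_le_pow_right₀ hNR1 (by omega)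
        have e2 : (j:ℝ)^2 ≤ |(j:ℝ)|^(α+2) := by
          calc (j:ℝ)^2 = |(j:ℝ)|^2 := (_root_.sq_abs _).symm
            _ ≤ |(j:ℝ)|^(α+2) := pow_le_pow_right₀ hjR (by omega)
        exact mul_le_mul e1 e2 (by positivity) (by positivity)
      have h3 : ‖c (inj j)‖ ≤ B / ((N:ℝ)^α * (j:ℝ)^2) := by
        calc ‖c (inj j)‖ ≤ B / |((inj j : ℤ) : ℝ)|^(α+2) := hB (inj j) hij0
          _ ≤ B / ((N:ℝ)^α * (j:ℝ)^2) := by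
            gcongr
      calc 2*Real.pi * ‖c (inj j)‖ ≤ 2*Real.pi * (B / ((N:ℝ)^α * (j:ℝ)^2)) := by
            exact mul_le_mul_of_nonneg_left h3 (by positivity)
        _ = (2*Real.pi*B/(N:ℝ)^α) * (1/(j:ℝ)^2) := by
            field_simp
  have hgsum' : Summable (fun j : ℤ => ‖e (inj j) - d (inj j)‖) :=
    Summable.of_nonneg_of_le (fun j => norm_nonneg _) hbound (hSsum.mul_left _)
  have hgsum : Summable (fun i : ℤ => ‖e i - d i‖) :=
    (hinj.summable_iff hzero).mp hgsum'
  rw [← hdiff.tsum_eq]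
  calc ‖∑' i, (e i - d i)‖ ≤ ∑' i, ‖e i - d i‖ := norm_tsum_le_tsum_norm hgsum
    _ = ∑' j, ‖e (inj j) - d (inj j)‖ := by
        refine (hinj.tsum_eq ?_).symm
        intro x hx
        by_contra hmem
        exact hx (hzero x hmem)
    _ ≤ ∑' j : ℤ, (2*Real.pi*B/(N:ℝ)^α) * (1/(j:ℝ)^2) :=
        Summable.tsum_le_tsum hbound hgsum' (hSsum.mul_left _)
    _ = (2*Real.pi*B/(N:ℝ)^α) * S := tsum_mul_left
    _ = 2*Real.pi*B*S/(N:ℝ)^α := by ring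
end

section
/- Let f : ℝ → ℝ be differentiable on ℝ, let α be a root of f (f(α) = 0), and let x_{n−1}, x_n ∈ ℝ satisfy x_{n−1} ≠ α, x_n ≠ α, and f(x_n) ≠ f(x_{n−1}). Define x_{n+1} = x_n − f(x_n)·(x_n − x_{n−1}) / (f(x_n) − f(x_{n−1})) and set e_k = x_k − α for k ∈ {n−1, n, n+1}. Then there exist β_n strictly between α and x_n and β_{n−1} strictly between α and x_{n−1} such that e_{n+1} = e_n · e_{n−1} · (f'(β_n) − f'(β_{n−1})) / (f(x_n) − f(x_{n−1})); in particular the secant-method error at the new step is proportional to the product of the two previous errors. -/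
open Set

theorem exists_mem_uIoo_sub_eq_mul_deriv {f : ℝ → ℝ} {a b : ℝ} (hab : a ≠ b)
    (hfc : ContinuousOn f (uIcc a b)) (hfd : DifferentiableOn ℝ f (uIoo a b)) :
    ∃ c ∈ uIoo a b, f b - f a = (b - a) * deriv f c := by
  wlog hlt : a < b generalizing a b
  · obtain ⟨c, hc, hslope⟩ := this hab.symm (uIcc_comm a b ▸ hfc) (uIoo_comm a b ▸ hfd)
      (lt_of_le_of_ne (not_lt.mp hlt) hab.symm)
    exact ⟨c, uIoo_comm a b ▸ hc, by linarith⟩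
  rw [uIcc_of_lt hlt] at hfc
  rw [uIoo_of_lt hlt] at hfd ⊢
  obtain ⟨c, hc, hslope⟩ := exists_deriv_eq_slope f hlt hfc hfd
  exact ⟨c, hc, by rw [hslope, mul_div_cancel₀ _ (sub_ne_zero.mpr hlt.ne')]⟩

theorem secant_step_sub_root_eq {x y α u v : ℝ} (hD : (x - α) * u - (y - α) * v ≠ 0) :
    x - (x - α) * u * (x - y) / ((x - α) * u - (y - α) * v) - α =
      (x - α) * (y - α) * (u - v) / ((x - α) * u - (y - α) * v) := by
  field_simp
  ring

/-- Mean-value form of the secant-method error: if `f` is differentiable,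
`f α = 0`, `x_{n-1} ≠ α`, `x_n ≠ α`, `f(x_n) ≠ f(x_{n-1})`, and `x_{n+1}` is the
secant update, then there exist `βn` strictly between `α` and `x_n` and `βnm1`
strictly between `α` and `x_{n-1}` such that
`e_{n+1} = e_n e_{n-1} (f'(βn) - f'(βnm1)) / (f(x_n) - f(x_{n-1}))`,
where `e_k = x_k - α`. -/
theorem secant_error_mvt_identity (f : ℝ → ℝ) (hf : Differentiable ℝ f)
    (α xnm1 xn : ℝ) (hroot : f α = 0)
    (hxnm1 : xnm1 ≠ α) (hxn : xn ≠ α) (hne : f xn ≠ f xnm1)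
    (xnp1 : ℝ)
    (hupdate : xnp1 = xn - f xn * (xn - xnm1) / (f xn - f xnm1))
    (enm1 en enp1 : ℝ)
    (henm1 : enm1 = xnm1 - α) (hen : en = xn - α) (henp1 : enp1 = xnp1 - α) :
    ∃ βn ∈ Set.Ioo (min α xn) (max α xn),
      ∃ βnm1 ∈ Set.Ioo (min α xnm1) (max α xnm1),
        enp1 = en * enm1 * (deriv f βn - deriv f βnm1) / (f xn - f xnm1) := by
  have mvt_from_root {x : ℝ} (hx : x ≠ α) : ∃ β ∈ uIoo α x, f x = (x - α) * deriv f β := by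
    simpa only [hroot, sub_zero] using exists_mem_uIoo_sub_eq_mul_deriv hx.symm
      hf.continuous.continuousOn hf.differentiableOn
  obtain ⟨βn, hβn, hfxn⟩ := mvt_from_root hxn
  obtain ⟨βnm1, hβnm1, hfxnm1⟩ := mvt_from_root hxnm1
  refine ⟨βn, hβn, βnm1, hβnm1, ?_⟩
  rw [hfxn, hfxnm1] at hne hupdate ⊢
  rw [henp1, hupdate, hen, henm1]
  exact secant_step_sub_root_eq (sub_ne_zero.mpr hne)
end
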